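/- The generated tree depth of a pointed structure (A,a) (the minimum height of a generated tree cover) equals its hybrid coalgebra number (the least k such that an Hk-coalgebra (A,a) → Hk(A,a) exists, or ω if none exists), up to the offset: the coalgebra number is k iff the generated tree depth is k+1 (minimal such k). -/

import Mathlib

/-- A pointed structure over a unimodal vocabulary: unary predicates indexed by `ι`,
one transition relation `E`, and a distinguished point. -/
structure PStr (ι : Type) where
  W : Type
  p : ι → W → Prop
  E : W → W → Prop
  pt : W

namespace PStr

variable {ι : Type}

/-- The universe of the hybrid comonad `Hk(A,a)`: nonempty plays of length ≤ k+1
starting at the distinguished point, in which every later element is seen (via `E`)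
from some earlier element. -/
def Valid (A : PStr ι) (k : ℕ) (s : List A.W) : Prop :=
  s ≠ [] ∧ s.head? = some A.pt ∧ s.length ≤ k + 1 ∧
    ∀ j : Fin s.length, 0 < (j : ℕ) →
      ∃ i : Fin s.length, (i : ℕ) < (j : ℕ) ∧ A.E (s.get i) (s.get j)

/-- The last element of a play (the counit ε). -/
def lastW (A : PStr ι) (s : List A.W) : A.W := s.getLast?.getD A.pt

/-- Lifting of a unary predicate to plays: it holds of the last element. -/
def liftP (A : PStr ι) (i : ι) (s : List A.W) : Prop := s ≠ [] ∧ A.p i (lastW A s)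

/-- Lifting of the transition relation to plays: the plays are comparable in the
prefix order and `E` holds of their last elements. -/
def liftE (A : PStr ι) (s t : List A.W) : Prop :=
  (s <+: t ∨ t <+: s) ∧ s ≠ [] ∧ t ≠ [] ∧ A.E (lastW A s) (lastW A t)

end PStr


namespace PStr

variable {ι : Type}

/-- A coalgebra `α : (A,a) → Hk(A,a)` for the hybrid comonad: a homomorphism of
pointed structures landing in valid plays, satisfying the counit and
comultiplication laws.  (Here `δ` sends a play to its list of nonempty prefixes and
`Hk α` acts by mapping `α` over a play, so the comultiplication law reads:
the `(j+1)`-st prefix of `α w` equals `α` of the `j`-th entry of `α w`.) -/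
def IsCoalg (A : PStr ι) (k : ℕ) (α : A.W → List A.W) : Prop :=
  (∀ w, Valid A k (α w)) ∧
  α A.pt = [A.pt] ∧
  (∀ i w, A.p i w → liftP A i (α w)) ∧
  (∀ w w', A.E w w' → liftE A (α w) (α w')) ∧
  (∀ w, lastW A (α w) = w) ∧
  (∀ w, ∀ j : Fin (α w).length, (α w).take ((j : ℕ) + 1) = α ((α w).get j))

/-- A generated tree cover of `(A,a)` of height ≤ n: a tree partial order on the
universe with least element the distinguished point, in which Gaifman-adjacent
elements are comparable, every non-root element is seen via `E` from a strictly
smaller element, and every chain has at most `n` elements. -/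
def GenTreeCover (A : PStr ι) (r : A.W → A.W → Prop) (n : ℕ) : Prop :=
  IsPartialOrder A.W r ∧
  (∀ x, r A.pt x) ∧
  (∀ x y z, r y x → r z x → (r y z ∨ r z y)) ∧
  (∀ x y, x ≠ y → (A.E x y ∨ A.E y x) → (r x y ∨ r y x)) ∧
  (∀ x, x ≠ A.pt → ∃ y, r y x ∧ y ≠ x ∧ A.E y x) ∧
  (∀ C : Set A.W, IsChain r C → C.encard ≤ (n : ℕ∞))

end PStr

/-!
A coalgebra `α` sends each point `x` to a play ending in `x` whose prefixes are the plays of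
its entries, so `x ≤ y ↔ α x <+: α y` is a tree order rooted at the distinguished point; chains
map injectively to play lengths, which are at most `k + 1`, and the last move of `α x` is seen
from an earlier entry, which is a strictly smaller `E`-predecessor of `x`.

Conversely, a generated tree cover is a tree order with finite branches, and sending `x` to the
chain below it, listed by rank, gives the coalgebra: branches of comparable points are prefixes
of one another, and the `E`-predecessor of a non-root point occurs earlier in its branch.
-/

section Branch

open Set

variable {P : Type*} [PartialOrder P] {w y : P} {j : ℕ}

noncomputable def branchRank (w : P) : ℕ := (Iic w).ncard

open Classical in
-- Index `j` holds the element of rank `j + 1`; `w` is a junk value when there is none.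
noncomputable def branchAt (w : P) (j : ℕ) : P :=
  if h : ∃ y ≤ w, branchRank y = j + 1 then h.choose else w

noncomputable def branch (w : P) : List P :=
  (List.range (branchRank w)).map (branchAt w)

lemma branchRank_pos (hfin : (Iic w).Finite) : 0 < branchRank w :=
  (ncard_pos hfin).2 ⟨w, mem_Iic.2 le_rfl⟩

lemma branchRank_mono (hfin : (Iic w).Finite) (hyw : y ≤ w) : branchRank y ≤ branchRank w :=
  ncard_le_ncard (Iic_subset_Iic.2 hyw) hfin

lemma branchRank_lt_branchRank (hfin : (Iic w).Finite) (hyw : y < w) :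
    branchRank y < branchRank w :=
  ncard_lt_ncard (Iic_ssubset_Iic.2 hyw) hfin

lemma branchRank_of_isBot (hb : IsBot y) : branchRank y = 1 := by
  have : Iic y = {y} := Set.ext fun x => ⟨fun hx => le_antisymm hx (hb x), fun hx => hx ▸ le_rfl⟩
  rw [branchRank, this, ncard_singleton]

lemma injOn_branchRank (hfin : (Iic w).Finite) (hc : IsChain (· ≤ ·) (Iic w)) :
    InjOn branchRank (Iic w) := by
  intro x hx z hz hxz
  have hrank_lt {a b : P} (hb : b ∈ Iic w) (hab : a < b) : branchRank a < branchRank b :=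
    branchRank_lt_branchRank (hfin.subset (Iic_subset_Iic.2 hb)) hab
  rcases hc.total hx hz with h | h
  · exact h.eq_of_not_lt fun hlt => (hrank_lt hz hlt).ne hxz
  · exact (h.eq_of_not_lt fun hlt => (hrank_lt hx hlt).ne hxz.symm).symm

-- In a finite chain, distinct elements have distinct ranks, so the ranks fill up `[1, rank w]`.
lemma image_branchRank_Iic (hfin : (Iic w).Finite) (hc : IsChain (· ≤ ·) (Iic w)) :
    branchRank '' Iic w = Icc 1 (branchRank w) := by
  refine eq_of_subset_of_ncard_le ?_ ?_ (finite_Icc _ _)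
  · rintro _ ⟨x, hx, rfl⟩
    exact ⟨branchRank_pos (hfin.subset (Iic_subset_Iic.2 hx)), branchRank_mono hfin hx⟩
  · rw [ncard_Icc_nat, (injOn_branchRank hfin hc).ncard_image, branchRank]
    omega

lemma branchAt_spec (hfin : (Iic w).Finite) (hc : IsChain (· ≤ ·) (Iic w))
    (hj : j < branchRank w) : branchAt w j ≤ w ∧ branchRank (branchAt w j) = j + 1 := by
  have hex : ∃ y ≤ w, branchRank y = j + 1 := by
    have : j + 1 ∈ branchRank '' Iic w := by
      rw [image_branchRank_Iic hfin hc]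
      exact ⟨by omega, hj⟩
    simpa only [mem_image, mem_Iic] using this
  rw [branchAt, dif_pos hex]
  exact hex.choose_spec

lemma branchAt_branchRank_sub_one (hfin : (Iic w).Finite) (hc : IsChain (· ≤ ·) (Iic w))
    (hyw : y ≤ w) : branchAt w (branchRank y - 1) = y := by
  have hy := branchRank_pos (hfin.subset (Iic_subset_Iic.2 hyw))
  have hspec := branchAt_spec hfin hc (j := branchRank y - 1)
    (by have := branchRank_mono hfin hyw; omega)
  exact injOn_branchRank hfin hc hspec.1 hyw (by omega)

lemma branchAt_of_le (hfin : (Iic w).Finite) (hc : IsChain (· ≤ ·) (Iic w)) (hyw : y ≤ w)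
    (hj : j < branchRank y) : branchAt y j = branchAt w j := by
  have hsub : Iic y ⊆ Iic w := Iic_subset_Iic.2 hyw
  obtain ⟨hle, hrank⟩ := branchAt_spec (hfin.subset hsub) (hc.mono hsub) hj
  have := branchAt_branchRank_sub_one hfin hc (hle.trans hyw)
  rw [hrank, Nat.add_sub_cancel] at this
  exact this.symm

@[simp]
lemma length_branch (w : P) : (branch w).length = branchRank w := by
  simp [branch]

@[simp]
lemma getElem_branch (hj : j < (branch w).length) : (branch w)[j] = branchAt w j := by
  simp [branch]

lemma branch_ne_nil (hfin : (Iic w).Finite) : branch w ≠ [] :=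
  List.ne_nil_of_length_pos (by simpa using branchRank_pos hfin)

lemma take_branch (hfin : (Iic w).Finite) (hc : IsChain (· ≤ ·) (Iic w)) (hyw : y ≤ w) :
    (branch w).take (branchRank y) = branch y := by
  rw [branch, ← List.map_take, List.take_range, min_eq_left (branchRank_mono hfin hyw), branch]
  exact List.map_congr_left fun j hj => (branchAt_of_le hfin hc hyw (List.mem_range.1 hj)).symm

lemma branch_prefix (hfin : (Iic w).Finite) (hc : IsChain (· ≤ ·) (Iic w)) (hyw : y ≤ w) :
    branch y <+: branch w :=
  take_branch hfin hc hyw ▸ List.take_prefix _ _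

lemma getLast_branch (hfin : (Iic w).Finite) (hc : IsChain (· ≤ ·) (Iic w)) :
    (branch w).getLast (branch_ne_nil hfin) = w := by
  simpa [List.getLast_eq_getElem] using branchAt_branchRank_sub_one hfin hc le_rfl

lemma head?_branch (hfin : (Iic w).Finite) (hc : IsChain (· ≤ ·) (Iic w)) (hb : IsBot y) :
    (branch w).head? = some y := by
  have hpos := branchRank_pos hfin
  have := branchAt_branchRank_sub_one hfin hc (hb w)
  rw [branchRank_of_isBot hb] at this
  simp [List.head?_eq_getElem?, hpos, this]

lemma branch_of_isBot (hb : IsBot y) : branch y = [y] := by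
  have hfin : (Iic y).Finite := (finite_singleton y).subset fun x hx => le_antisymm hx (hb x)
  have hc : IsChain (· ≤ ·) (Iic y) := fun a ha b hb' _ => Or.inl (ha.trans (hb b))
  obtain ⟨a, ha⟩ := List.length_eq_one_iff.1 ((length_branch y).trans (branchRank_of_isBot hb))
  simpa [ha] using head?_branch hfin hc hb

lemma branchRank_getElem_branch (hfin : (Iic w).Finite) (hc : IsChain (· ≤ ·) (Iic w))
    (hj : j < (branch w).length) : branchRank (branch w)[j] = j + 1 := by
  rw [getElem_branch]
  exact (branchAt_spec hfin hc (by simpa using hj)).2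

lemma getElem_branch_le (hfin : (Iic w).Finite) (hc : IsChain (· ≤ ·) (Iic w))
    (hj : j < (branch w).length) : (branch w)[j] ≤ w := by
  rw [getElem_branch]
  exact (branchAt_spec hfin hc (by simpa using hj)).1

lemma exists_lt_getElem_branch (hfin : (Iic w).Finite) (hc : IsChain (· ≤ ·) (Iic w))
    (hj : j < (branch w).length) (hy : y < (branch w)[j]) :
    ∃ i : Fin (branch w).length, (i : ℕ) < j ∧ (branch w)[(i : ℕ)] = y := by
  have hyw := hy.le.trans (getElem_branch_le hfin hc hj)
  have hrank := branchRank_lt_branchRank (hfin.subset (Iic_subset_Iic.2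
    (getElem_branch_le hfin hc hj))) hy
  have hpos := branchRank_pos (hfin.subset (Iic_subset_Iic.2 hyw))
  rw [branchRank_getElem_branch hfin hc hj] at hrank
  refine ⟨⟨branchRank y - 1, by simp at hj ⊢; omega⟩, by simp only; omega, ?_⟩
  simpa using branchAt_branchRank_sub_one hfin hc hyw

end Branch

namespace PStr

variable {ι : Type} {A : PStr ι} {k : ℕ} {α : A.W → List A.W}

lemma lastW_eq_getLast {s : List A.W} (hs : s ≠ []) : lastW A s = s.getLast hs := by
  rw [lastW, List.getLast?_eq_some_getLast hs, Option.getD_some]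

namespace IsCoalg

lemma lastW_apply (hα : IsCoalg A k α) (x : A.W) : lastW A (α x) = x :=
  hα.2.2.2.2.1 x

lemma injective (hα : IsCoalg A k α) : Function.Injective α :=
  fun x y h => by rw [← hα.lastW_apply x, ← hα.lastW_apply y, h]

lemma pt_prefix (hα : IsCoalg A k α) (x : A.W) : α A.pt <+: α x := by
  obtain ⟨hvalid, hpt, -⟩ := hα
  obtain ⟨hne, hhead, -⟩ := hvalid x
  obtain ⟨a, t, hax⟩ := List.exists_cons_of_ne_nil hne
  rw [hax, List.head?_cons, Option.some_inj] at hhead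
  exact ⟨t, by rw [hpt, hax, hhead]; rfl⟩

lemma getElem_length_sub_one (hα : IsCoalg A k α) (x : A.W) :
    (α x)[(α x).length - 1]'(by grind [(hα.1 x).1, List.length_pos_iff]) = x := by
  rw [← List.getLast_eq_getElem (hα.1 x).1, ← lastW_eq_getLast, hα.lastW_apply]

-- `α x = [a]` would force `x = lastW A [a] = a = A.pt`.
lemma one_lt_length (hα : IsCoalg A k α) {x : A.W} (hx : x ≠ A.pt) : 1 < (α x).length := by
  obtain ⟨hne, hhead, -⟩ := hα.1 x
  by_contra! hlen
  obtain ⟨a, ha⟩ := List.length_eq_one_iff.1 (le_antisymm hlen (List.length_pos_iff.2 hne))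
  rw [ha, List.head?_cons, Option.some_inj] at hhead
  exact hx (by rw [← hα.lastW_apply x, ha, hhead]; rfl)

lemma exists_E_predecessor (hα : IsCoalg A k α) {x : A.W} (hx : x ≠ A.pt) :
    ∃ y, α y <+: α x ∧ y ≠ x ∧ A.E y x := by
  have hlen := hα.one_lt_length hx
  obtain ⟨i, hij, hE⟩ := (hα.1 x).2.2.2 ⟨(α x).length - 1, by omega⟩ (by simp only; omega)
  have htake := hα.2.2.2.2.2 x i
  simp only [List.get_eq_getElem, hα.getElem_length_sub_one] at hij hE htake
  refine ⟨(α x)[(i : ℕ)], htake ▸ List.take_prefix _ _, fun hix => ?_, hE⟩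
  have := congrArg List.length htake
  rw [hix, List.length_take] at this
  omega

lemma encard_le_of_isChain (hα : IsCoalg A k α) {C : Set A.W}
    (hC : IsChain (fun x y => α x <+: α y) C) : C.encard ≤ (k + 1 : ℕ) := by
  have hinj : Set.InjOn (fun x => (α x).length) C := by
    intro x hx y hy hxy
    by_contra hne
    rcases hC hx hy hne with h | h
    · exact hne (hα.injective (h.eq_of_length hxy))
    · exact hne (hα.injective (h.eq_of_length hxy.symm)).symm
  have hmaps : Set.MapsTo (fun x => (α x).length) C (Set.Icc 1 (k + 1)) :=
    fun x _ => ⟨List.length_pos_iff.2 (hα.1 x).1, (hα.1 x).2.2.1⟩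
  calc C.encard ≤ (Set.Icc 1 (k + 1)).encard := Set.encard_le_encard_of_injOn hmaps hinj
    _ = (k + 1 : ℕ) := by rw [← (Set.finite_Icc _ _).cast_ncard_eq, Set.ncard_Icc_nat]; simp

lemma genTreeCover (hα : IsCoalg A k α) :
    GenTreeCover A (fun x y => α x <+: α y) (k + 1) := by
  refine ⟨?_, hα.pt_prefix, fun _ _ _ => List.prefix_or_prefix_of_prefix, ?_,
    fun _ => hα.exists_E_predecessor, fun _ => hα.encard_le_of_isChain⟩
  · exact { refl := fun x => List.prefix_refl _
            trans := fun _ _ _ => List.IsPrefix.trans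
            antisymm := fun x y hxy hyx =>
              hα.injective (hxy.eq_of_length (le_antisymm hxy.length_le hyx.length_le)) }
  · rintro x y - (h | h)
    exacts [(hα.2.2.2.1 x y h).1, (hα.2.2.2.1 y x h).1.symm]

end IsCoalg

namespace GenTreeCover

lemma isChain_Iic [PartialOrder A.W] {n : ℕ} (h : GenTreeCover A (· ≤ ·) n) (w : A.W) :
    IsChain (· ≤ ·) (Set.Iic w) :=
  fun x hx y hy _ => h.2.2.1 w x y hx hy

lemma finite_Iic_and_branchRank_le [PartialOrder A.W] {n : ℕ} (h : GenTreeCover A (· ≤ ·) n)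
    (w : A.W) : (Set.Iic w).Finite ∧ branchRank w ≤ n :=
  Set.encard_le_coe_iff_finite_ncard_le.1 (h.2.2.2.2.2 _ (h.isChain_Iic w))

lemma valid_branch [PartialOrder A.W] (h : GenTreeCover A (· ≤ ·) (k + 1)) (w : A.W) :
    Valid A k (branch w) := by
  obtain ⟨hfin, hrank⟩ := h.finite_Iic_and_branchRank_le w
  have hc := h.isChain_Iic w
  have hbot : IsBot A.pt := h.2.1
  refine ⟨branch_ne_nil hfin, head?_branch hfin hc hbot, by simpa using hrank, fun j hj => ?_⟩
  have hne : (branch w)[(j : ℕ)] ≠ A.pt := fun heq => by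
    have := branchRank_getElem_branch hfin hc j.isLt
    rw [heq, branchRank_of_isBot hbot] at this
    omega
  obtain ⟨y, hyx, hyne, hE⟩ := h.2.2.2.2.1 _ hne
  obtain ⟨i, hij, hi⟩ := exists_lt_getElem_branch hfin hc j.isLt (lt_of_le_of_ne hyx hyne)
  exact ⟨i, hij, by rwa [List.get_eq_getElem, List.get_eq_getElem, hi]⟩

lemma isCoalg_branch [PartialOrder A.W] (h : GenTreeCover A (· ≤ ·) (k + 1)) :
    IsCoalg A k branch := by
  have hfin w := (h.finite_Iic_and_branchRank_le w).1
  have hc := h.isChain_Iic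
  have hlast w : lastW A (branch w) = w := by
    rw [lastW_eq_getLast (branch_ne_nil (hfin w)), getLast_branch (hfin w) (hc w)]
  refine ⟨h.valid_branch, branch_of_isBot h.2.1,
    fun i w hp => ⟨branch_ne_nil (hfin w), (hlast w).symm ▸ hp⟩,
    fun w w' hE => ⟨?_, branch_ne_nil (hfin w), branch_ne_nil (hfin w'), by rwa [hlast, hlast]⟩,
    hlast, fun w j => ?_⟩
  · rcases eq_or_ne w w' with rfl | hne
    · exact Or.inl (List.prefix_refl _)
    · exact (h.2.2.2.1 w w' hne (Or.inl hE)).imp (branch_prefix (hfin _) (hc _))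
        (branch_prefix (hfin _) (hc _))
  · rw [List.get_eq_getElem, ← branchRank_getElem_branch (hfin w) (hc w) j.isLt]
    exact take_branch (hfin w) (hc w) (getElem_branch_le (hfin w) (hc w) j.isLt)

lemma exists_isCoalg {r : A.W → A.W → Prop} (h : GenTreeCover A r (k + 1)) :
    ∃ α, IsCoalg A k α :=
  haveI := h.1
  letI : PartialOrder A.W :=
    { le := r
      le_refl := refl_of r
      le_trans := fun _ _ _ => trans_of r
      le_antisymm := fun _ _ => antisymm_of r }
  ⟨branch, isCoalg_branch h⟩

end GenTreeCover

theorem generated_tree_depth_eq_hybrid_coalgebra_number_general (A : PStr ι) (k : ℕ) :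
    (∃ α : A.W → List A.W, IsCoalg A k α) ↔
      (∃ r : A.W → A.W → Prop, GenTreeCover A r (k + 1)) :=
  ⟨fun ⟨_, hα⟩ => ⟨_, hα.genTreeCover⟩, fun ⟨_, hr⟩ => hr.exists_isCoalg⟩

/-- The generated tree depth of `(A,a)` (the minimum height of a generated tree
cover) coincides with its hybrid coalgebra number (the least `k` admitting an
`Hk`-coalgebra, ω if none exists), up to the offset: for every `k > 0`, an
`Hk`-coalgebra on `(A,a)` exists iff `(A,a)` has a generated tree cover of height
at most `k+1`.  Hence the least such `k` (the hybrid coalgebra number) is `k` iff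
the generated tree depth is `k+1`, and one is ω iff the other is. -/
theorem generated_tree_depth_eq_hybrid_coalgebra_number (A : PStr ι) (k : ℕ) (hk : 0 < k) :
    (∃ α : A.W → List A.W, IsCoalg A k α) ↔
      (∃ r : A.W → A.W → Prop, GenTreeCover A r (k + 1)) :=
  generated_tree_depth_eq_hybrid_coalgebra_number_general A k

end PStr
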